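/- As m → ∞, Γ(m, m+1) ~ (m/e)^m · sqrt(π/(2m)), i.e., lim_{m→∞} Γ(m,m+1)·(e/m)^m·sqrt(2m/π) = 1. -/

import Mathlib

/-!
Writing m = K + 1, the incomplete gamma function is the tail integral
Γ(K + 1, K + 2) = ∫_{K+2}^∞ t^K e^{-t} dt. Laplace's method: the substitution t = K + √K s gives
√K K^K e^{-K} ∫_{2/√K}^∞ (1 + s/√K)^K e^{-√K s} ds, whose integrand tends to e^{-s²/2} and is
dominated by e^{1 - s/2}, so the integral tends to ∫_0^∞ e^{-s²/2} ds = √(π/2). The remaining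
factors are elementary, using (1 + 1/K)^K → e.
-/

open Finset Real Filter

/-- Incomplete gamma function at natural arguments. -/
noncomputable def incGamma (m : ℕ) (n : ℝ) : ℝ :=
  (Nat.factorial (m - 1) : ℝ) * Real.exp (-n) *
    ∑ i ∈ Finset.range m, n ^ i / (Nat.factorial i : ℝ)

open MeasureTheory Set Topology

open scoped Nat

theorem hasDerivAt_sum_range_pow_div_factorial (n : ℕ) (x : ℝ) :
    HasDerivAt (fun y : ℝ => ∑ i ∈ range (n + 1), y ^ i / i !) (∑ i ∈ range n, x ^ i / i !) x := by
  induction n with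
  | zero => simpa using hasDerivAt_const x (1 : ℝ)
  | succ n ih =>
    have hterm : HasDerivAt (fun y : ℝ => y ^ (n + 1) / (n + 1)!) (x ^ n / n !) x := by
      refine ((hasDerivAt_pow (n + 1) x).div_const _).congr_deriv ?_
      rw [Nat.factorial_succ]; push_cast; field_simp
    rw [sum_range_succ]
    exact (ih.add hterm).congr_of_eventuallyEq (.of_forall fun y => sum_range_succ _ _)

theorem hasDerivAt_incGamma_succ (n : ℕ) (x : ℝ) :
    HasDerivAt (incGamma (n + 1)) (-(x ^ n * exp (-x))) x := by
  have hexp : HasDerivAt (fun y => exp (-y)) (-exp (-x)) x := by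
    simpa using (hasDerivAt_neg x).exp
  refine (((hexp.const_mul (n ! : ℝ)).mul (hasDerivAt_sum_range_pow_div_factorial n x)).congr_deriv
    ?_).congr_of_eventuallyEq (.of_forall fun y => by simp [incGamma])
  rw [sum_range_succ]; field_simp; ring

theorem tendsto_incGamma_atTop (m : ℕ) : Tendsto (incGamma m) atTop (𝓝 0) := by
  have h : Tendsto (fun y : ℝ => ∑ i ∈ range m, y ^ i * exp (-y) / i !) atTop (𝓝 0) := by
    simpa using tendsto_finsetSum (range m) fun i _ =>
      (tendsto_pow_mul_exp_neg_atTop_nhds_zero i).div_const (i ! : ℝ)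
  simpa using (h.const_mul ((m - 1)! : ℝ)).congr fun y => by
    simp only [incGamma, mul_sum, mul_assoc]; congr 1; ext i; ring

theorem incGamma_succ_eq_integral (n : ℕ) {a : ℝ} (ha : 0 ≤ a) :
    incGamma (n + 1) a = ∫ t in Ioi a, t ^ n * exp (-t) := by
  have hnonneg (x : ℝ) (hxa : x ∈ Ioi a) : 0 ≤ -(-(x ^ n * exp (-x))) := by
    have : 0 ≤ x := ha.trans (le_of_lt hxa)
    rw [neg_neg]; positivity
  have := integral_Ioi_of_hasDerivAt_of_nonneg' (fun x _ => (hasDerivAt_incGamma_succ n x).neg)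
    hnonneg (tendsto_incGamma_atTop (n + 1)).neg
  simpa [eq_comm] using this

theorem integral_Ioi_comp_add_right {E : Type*} [NormedAddCommGroup E] [NormedSpace ℝ E]
    (f : ℝ → E) (a b : ℝ) : ∫ x in Ioi a, f (x + b) = ∫ x in Ioi (a + b), f x := by
  have h := (measurePreserving_add_right volume b).setIntegral_preimage_emb
    (measurableEmbedding_addRight b) f (Ioi (a + b))
  rw [← h]; congr 1
  ext x; simp

noncomputable def stirlingKernel (K : ℕ) (s : ℝ) : ℝ := (1 + s / √K) ^ K * exp (-(√K * s))

theorem integral_Ioi_natCast_add_pow_mul_exp_neg {K : ℕ} (hK : K ≠ 0) (c : ℝ) :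
    ∫ t in Ioi (K + c), t ^ K * exp (-t) =
      √K * (K ^ K * exp (-K) * ∫ s in Ioi (c / √K), stirlingKernel K s) := by
  have hr : 0 < √(K : ℝ) := by positivity
  have hrr : √(K : ℝ) * √K = K := mul_self_sqrt (Nat.cast_nonneg K)
  have hsubst (s : ℝ) : (√K * s + K) ^ K * exp (-(√K * s + K)) =
      K ^ K * exp (-K) * stirlingKernel K s := by
    have : (√K * s + K : ℝ) = K * (1 + s / √K) := by field_simp; linear_combination s * hrr
    rw [stirlingKernel, neg_add, exp_add, this, mul_pow]; ring
  calc ∫ t in Ioi (K + c), t ^ K * exp (-t)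
      = ∫ x in Ioi (√K * (c / √K)), (x + K) ^ K * exp (-(x + K)) := by
        rw [mul_div_cancel₀ c hr.ne', integral_Ioi_comp_add_right (fun t => t ^ K * exp (-t)),
          add_comm]
    _ = √K * ∫ s in Ioi (c / √K), (√K * s + K) ^ K * exp (-(√K * s + K)) := by
        rw [integral_comp_mul_left_Ioi (fun x => (x + K) ^ K * exp (-(x + K))) _ hr, smul_eq_mul,
          mul_inv_cancel_left₀ hr.ne']
    _ = _ := by simp_rw [hsubst, integral_const_mul]

theorem abs_log_one_add_sub_self_add_sq_le {u : ℝ} (hu : |u| ≤ 1 / 2) :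
    |log (1 + u) - u + u ^ 2 / 2| ≤ 2 * |u| ^ 3 := by
  have h := abs_log_sub_add_sum_range_le (x := -u) (by rw [abs_neg]; linarith) 2
  norm_num [sum_range_succ] at h
  calc |log (1 + u) - u + u ^ 2 / 2| = |-u + u ^ 2 / 2 + log (1 + u)| := by ring_nf
    _ ≤ |u| ^ 3 / (1 - |u|) := h
    _ ≤ 2 * |u| ^ 3 := by
      rw [div_le_iff₀ (by linarith)]
      nlinarith [pow_nonneg (abs_nonneg u) 3]

theorem log_one_add_le_sub_sq_div {u : ℝ} (hu : 0 ≤ u) :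
    log (1 + u) ≤ u - u ^ 2 / (2 * (2 + u)) := by
  set r := √(1 + u)
  have hr2 : r ^ 2 = 1 + u := sq_sqrt (by linarith)
  have hr1 : 1 ≤ r := one_le_sqrt.2 (by linarith)
  have hlog : log (1 + u) = 2 * log r := by rw [log_sqrt (by linarith)]; ring
  have hlog_le : log r ≤ r - 1 := log_le_sub_one_of_pos (by linarith)
  have hsq : u ^ 2 / (2 * (2 + u)) ≤ (r - 1) ^ 2 := by
    rw [div_le_iff₀ (by positivity)]
    nlinarith [sq_nonneg (r - 1)]
  nlinarith

theorem tendsto_mul_log_one_add_div_sqrt_sub (s : ℝ) :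
    Tendsto (fun k : ℝ => k * log (1 + s / √k) - √k * s) atTop (𝓝 (-s ^ 2 / 2)) := by
  rw [← tendsto_sub_nhds_zero_iff]
  refine squeeze_zero_norm' ?_
    ((tendsto_const_nhds (x := 2 * |s| ^ 3)).div_atTop tendsto_sqrt_atTop)
  filter_upwards [eventually_gt_atTop 0, eventually_ge_atTop ((2 * |s|) ^ 2)] with k hk hks
  have hr : 0 < √k := sqrt_pos.2 hk
  have hrr : √k * √k = k := mul_self_sqrt hk.le
  have hu : |s / √k| ≤ 1 / 2 := by
    have := abs_le_sqrt hks
    rw [abs_div, abs_of_pos hr, div_le_iff₀ hr]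
    rw [abs_of_nonneg (by positivity)] at this
    linarith
  have hexpand : k * log (1 + s / √k) - √k * s - -s ^ 2 / 2 =
      k * (log (1 + s / √k) - s / √k + (s / √k) ^ 2 / 2) := by
    field_simp
    rw [sq_sqrt hk.le]
    linear_combination (-2 * k * log ((√k + s) / √k)) * hrr
  rw [Real.norm_eq_abs, hexpand, abs_mul, abs_of_pos hk]
  calc k * |log (1 + s / √k) - s / √k + (s / √k) ^ 2 / 2|
      ≤ k * (2 * |s / √k| ^ 3) := by gcongr; exact abs_log_one_add_sub_self_add_sq_le hu
    _ = 2 * |s| ^ 3 / √k := by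
      rw [abs_div, abs_of_pos hr]
      field_simp
      linear_combination (-|s| ^ 3) * hrr

theorem stirlingKernel_eq_exp {K : ℕ} {s : ℝ} (h : 0 < 1 + s / √K) :
    stirlingKernel K s = exp (K * log (1 + s / √K) - √K * s) := by
  rw [stirlingKernel, sub_eq_add_neg, exp_add, exp_nat_mul, exp_log h]

theorem tendsto_stirlingKernel (s : ℝ) :
    Tendsto (fun K : ℕ => stirlingKernel K s) atTop (𝓝 (exp (-s ^ 2 / 2))) := by
  have hu : Tendsto (fun K : ℕ => s / √K) atTop (𝓝 0) :=
    tendsto_const_nhds.div_atTop (tendsto_sqrt_atTop.comp tendsto_natCast_atTop_atTop)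
  refine (((tendsto_mul_log_one_add_div_sqrt_sub s).comp
    tendsto_natCast_atTop_atTop).rexp).congr' ?_
  filter_upwards [hu.eventually (lt_mem_nhds (show (-1 : ℝ) < 0 by norm_num))] with K hK
  exact (stirlingKernel_eq_exp (by linarith)).symm

theorem stirlingKernel_le {K : ℕ} (hK : K ≠ 0) {s : ℝ} (hs : 0 ≤ s) :
    stirlingKernel K s ≤ exp (1 - s / 2) := by
  have hK1 : (1 : ℝ) ≤ K := by exact_mod_cast Nat.one_le_iff_ne_zero.2 hK
  have hr : 1 ≤ √(K : ℝ) := one_le_sqrt.2 hK1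
  have hrr : √(K : ℝ) * √K = K := mul_self_sqrt (Nat.cast_nonneg K)
  set u := s / √K
  have hu0 : 0 ≤ u := by positivity
  have hus : u ≤ s := div_le_self hs hr
  rw [stirlingKernel_eq_exp (by positivity), exp_le_exp]
  calc K * log (1 + u) - √K * s ≤ K * (u - u ^ 2 / (2 * (2 + u))) - √K * s := by
        gcongr; exact log_one_add_le_sub_sq_div hu0
    _ = -s ^ 2 / (2 * (2 + u)) := by
        simp only [u]; field_simp; linear_combination (-(4 * s * √K + s ^ 2)) * hrr
    _ ≤ 1 - s / 2 := by
        rw [div_le_iff₀ (by positivity)]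
        nlinarith

theorem integral_Ioi_exp_neg_sq_div_two : ∫ s in Ioi (0 : ℝ), exp (-s ^ 2 / 2) = √(π / 2) := by
  simp_rw [show ∀ s : ℝ, -s ^ 2 / 2 = -(1 / 2) * s ^ 2 from fun s => by ring]
  rw [integral_gaussian_Ioi, show π / (1 / 2) = 2 ^ 2 * (π / 2) by ring,
    sqrt_mul (by positivity), sqrt_sq zero_le_two, mul_div_cancel_left₀ _ two_ne_zero]

theorem tendsto_integral_stirlingKernel {c : ℝ} (hc : 0 ≤ c) :
    Tendsto (fun K : ℕ => ∫ s in Ioi (c / √K), stirlingKernel K s) atTop (𝓝 √(π / 2)) := by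
  have hrestrict (K : ℕ) : ∫ s in Ioi (c / √K), stirlingKernel K s =
      ∫ s in Ioi 0, (Ioi (c / √K)).indicator (stirlingKernel K) s := by
    rw [integral_indicator measurableSet_Ioi, Measure.restrict_restrict measurableSet_Ioi,
      Ioi_inter_Ioi, sup_eq_left.2 (by positivity)]
  simp_rw [hrestrict, ← integral_Ioi_exp_neg_sq_div_two]
  refine tendsto_integral_filter_of_dominated_convergence (fun s => exp (1 - s / 2)) ?_ ?_ ?_ ?_
  · refine .of_forall fun K => (Measurable.indicator ?_ measurableSet_Ioi).aestronglyMeasurable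
    unfold stirlingKernel; fun_prop
  · filter_upwards [eventually_ne_atTop 0] with K hK
    refine (ae_restrict_iff' measurableSet_Ioi).2 (.of_forall fun s (hs : 0 < s) => ?_)
    refine (norm_indicator_le_norm_self _ _).trans ?_
    rw [Real.norm_of_nonneg (by unfold stirlingKernel; positivity)]
    exact stirlingKernel_le hK hs.le
  · have := (exp_neg_integrableOn_Ioi 0 (by norm_num : (0 : ℝ) < 1 / 2)).const_mul (exp 1)
    refine IntegrableOn.congr_fun this (fun s _ => ?_) measurableSet_Ioi
    rw [← exp_add]; ring_nf
  · refine (ae_restrict_iff' measurableSet_Ioi).2 (.of_forall fun s (hs : 0 < s) => ?_)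
    have hlower : Tendsto (fun K : ℕ => c / √K) atTop (𝓝 0) :=
      tendsto_const_nhds.div_atTop (tendsto_sqrt_atTop.comp tendsto_natCast_atTop_atTop)
    refine (tendsto_stirlingKernel s).congr' ?_
    filter_upwards [hlower.eventually (gt_mem_nhds hs)] with K hK
    exact (indicator_of_mem hK _).symm

theorem incGamma_succ_mul_eq {K : ℕ} (hK : K ≠ 0) :
    incGamma (K + 1) (((K + 1 : ℕ) : ℝ) + 1) * (exp 1 / ((K + 1 : ℕ) : ℝ)) ^ (K + 1) *
        √(2 * ((K + 1 : ℕ) : ℝ) / π) =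
      (∫ s in Ioi (2 / √K), stirlingKernel K s) * (exp 1 / (1 + 1 / K) ^ K) *
        √(2 / π * (K / (K + 1))) := by
  have hk : (0 : ℝ) < K := by positivity
  rw [show ((K + 1 : ℕ) : ℝ) + 1 = K + 2 by push_cast; ring,
    incGamma_succ_eq_integral K (by positivity), integral_Ioi_natCast_add_pow_mul_exp_neg hK]
  have hexp : exp (-K) * exp 1 ^ (K + 1) = exp 1 := by
    rw [← exp_nat_mul, ← exp_add]; push_cast; ring_nf
  have hsqrt : √(2 / π * (K / (K + 1))) = √K * √(2 * (K + 1) / π) / (K + 1) := by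
    calc √(2 / π * (K / (K + 1))) = √(K * (2 * (K + 1) / π) / (K + 1) ^ 2) := by
          congr 1; field_simp
      _ = √K * √(2 * (K + 1) / π) / (K + 1) := by
          rw [sqrt_div' _ (sq_nonneg _), sqrt_sq (by positivity), sqrt_mul hk.le]
  rw [hsqrt, div_pow, one_add_div hk.ne', div_pow]
  push_cast
  field_simp
  linear_combination (∫ s in Ioi (2 / √K), stirlingKernel K s) * (K + 1 : ℝ) ^ (K + 1) * hexp

theorem incGamma_asymptotic :
    Tendsto
      (fun m : ℕ =>
        incGamma m ((m : ℝ) + 1) * (Real.exp 1 / (m : ℝ)) ^ m *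
          Real.sqrt (2 * (m : ℝ) / Real.pi))
      atTop (nhds 1) := by
  rw [← tendsto_add_atTop_iff_nat 1]
  have hJ := tendsto_integral_stirlingKernel (zero_le_two (α := ℝ))
  have he : Tendsto (fun K : ℕ => exp 1 / (1 + 1 / K) ^ K) atTop (𝓝 1) := by
    have := (tendsto_const_nhds (x := exp 1)).div (tendsto_one_add_div_pow_exp 1) (exp_ne_zero 1)
    rwa [div_self (exp_ne_zero 1)] at this
  have hr : Tendsto (fun K : ℕ => √(2 / π * (K / (K + 1)))) atTop (𝓝 √(2 / π)) := by
    simpa using ((tendsto_natCast_div_add_atTop (1 : ℝ)).const_mul (2 / π)).sqrt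
  have hone : √(π / 2) * 1 * √(2 / π) = 1 := by
    rw [mul_one, ← sqrt_mul (by positivity), div_mul_div_comm, mul_comm π, div_self (by positivity),
      sqrt_one]
  refine (hone ▸ (hJ.mul he).mul hr).congr' ?_
  filter_upwards [eventually_ne_atTop 0] with K hK
  exact (incGamma_succ_mul_eq hK).symm
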